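/- arXiv:2212.03008 — 6 statements merged into one kernel-verified Lean document; each statement's English description precedes it below -/
import Mathlib

section
/- Let A and B be symmetric PSD d×d real matrices with A ⪰ B (i.e., A − B is PSD), and let k = rank(A). Then 2·tr(A−B)·λ_k(B) ≤ ‖A‖_F² − ‖B‖_F² ≤ 2·tr(A−B)·λ_1(A), where λ_k(B) denotes the k-th largest eigenvalue of B and λ_1(A) the largest eigenvalue of A. -/
/-! With `C = A - B`, `‖A‖² - ‖B‖² = tr (C A) + tr (C B)` and `tr (C A) - tr (C B) = tr (C²) ≥ 0`,
so it suffices to compare `tr (C A)` and `tr (C B)` with `tr C`. In an orthonormal eigenbasis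
`(u_b)` of a symmetric `X`, `tr (C X) = ∑ λ_b ⟪u_b, C u_b⟫` is a combination of the eigenvalues
of `X` with nonnegative weights of total mass `tr C`; this gives `tr (C A) ≤ λ₁(A) tr C` at once.
For the lower bound, if `λ_k(B) > 0` then `rank B ≥ k = rank A`, while `A ⪰ B` forces
`ker A ⊆ ker B`; so `ker A = ker B ⊆ ker C`, the weights of the zero eigenvalues of `B` vanish,
and every nonzero eigenvalue of `B` is at least `λ_k(B)`. -/

open Finset Matrix

theorem Antitone.val_add_one_le_card_filter_lt {α : Type*} [Preorder α] [DecidableLT α] {d : ℕ}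
    {μ : Fin d → α} (hμ : Antitone μ) {a : α} {x : Fin d} (hx : a < μ x) : (x : ℕ) + 1 ≤ #{y | a < μ y} :=
  calc (x : ℕ) + 1 = #(Iic x) := (Fin.card_Iic x).symm
    _ ≤ #{y | a < μ y} := card_le_card fun y hy ↦ by
      simpa using hx.trans_le (hμ (mem_Iic.mp hy))

namespace Matrix

variable {n : Type*} [Fintype n]

theorem IsSymm.sum_sq_eq_trace_mul_self {R : Type*} [CommSemiring R] {A : Matrix n n R}
    (hA : A.IsSymm) : ∑ i, ∑ j, A i j ^ 2 = (A * A).trace := by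
  simp only [trace, diag_apply, mul_apply, sq]
  exact sum_congr rfl fun i _ ↦ sum_congr rfl fun j _ ↦ by rw [hA.apply i j]

theorem trace_mul_self_sub_trace_mul_self {R : Type*} [CommRing R] (A B : Matrix n n R) :
    (A * A).trace - (B * B).trace = ((A - B) * A).trace + ((A - B) * B).trace := by
  simp only [sub_mul, trace_sub, trace_mul_comm B A]
  ring

theorem rank_add_finrank_ker {K : Type*} [Field K] (A : Matrix n n K) :
    A.rank + Module.finrank K (LinearMap.ker A.mulVecLin) = Fintype.card n := by
  rw [rank]
  simpa using A.mulVecLin.finrank_range_add_finrank_ker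

theorem rank_le_rank_of_ker_le {K : Type*} [Field K] {A B : Matrix n n K}
    (h : LinearMap.ker A.mulVecLin ≤ LinearMap.ker B.mulVecLin) : B.rank ≤ A.rank := by
  have := Submodule.finrank_mono h
  have := rank_add_finrank_ker A
  have := rank_add_finrank_ker B
  omega

theorem ker_le_ker_sub_of_ker_le {K : Type*} [Field K] {A B : Matrix n n K}
    (h : LinearMap.ker A.mulVecLin ≤ LinearMap.ker B.mulVecLin) (hrank : A.rank ≤ B.rank) :
    LinearMap.ker B.mulVecLin ≤ LinearMap.ker (A - B).mulVecLin := by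
  have hker : LinearMap.ker A.mulVecLin = LinearMap.ker B.mulVecLin :=
    Submodule.eq_of_le_of_finrank_le h <| by
      have := rank_add_finrank_ker A
      have := rank_add_finrank_ker B
      omega
  intro x hx
  have hxA : A *ᵥ x = 0 := hker.ge hx
  rw [LinearMap.mem_ker, mulVecLin_apply] at hx ⊢
  rw [sub_mulVec, hxA, hx, sub_zero]

theorem PosSemidef.ker_le_ker_of_posSemidef_sub {A B : Matrix n n ℝ} (hB : B.PosSemidef)
    (hAB : (A - B).PosSemidef) : LinearMap.ker A.mulVecLin ≤ LinearMap.ker B.mulVecLin := by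
  intro x hx
  rw [LinearMap.mem_ker, mulVecLin_apply] at hx ⊢
  have hBx : star x ⬝ᵥ B *ᵥ x ≤ 0 := by
    simpa [sub_mulVec, hx] using hAB.dotProduct_mulVec_nonneg x
  exact (hB.dotProduct_mulVec_zero_iff x).mp (hBx.antisymm (hB.dotProduct_mulVec_nonneg x))

variable [DecidableEq n]

theorem IsHermitian.trace_eq_sum_eigenvectorBasis {A : Matrix n n ℝ} (hA : A.IsHermitian)
    (C : Matrix n n ℝ) :
    C.trace = ∑ b, ⇑(hA.eigenvectorBasis b) ⬝ᵥ C *ᵥ ⇑(hA.eigenvectorBasis b) := by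
  set U : Matrix n n ℝ := (hA.eigenvectorUnitary : Matrix n n ℝ)
  have hU : U * star U = 1 := mem_unitaryGroup_iff.mp hA.eigenvectorUnitary.2
  calc C.trace = (star U * C * U).trace := by rw [trace_mul_cycle, hU, Matrix.one_mul]
    _ = _ := by
      simp only [trace, diag_apply, mul_apply, star_apply, eigenvectorUnitary_apply, star_trivial,
        dotProduct, mulVec, mul_sum, mul_assoc, U]

theorem IsHermitian.trace_mul_eq_sum_eigenvalues_mul {A : Matrix n n ℝ} (hA : A.IsHermitian)
    (C : Matrix n n ℝ) :
    (C * A).trace = ∑ b, hA.eigenvalues b *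
      (⇑(hA.eigenvectorBasis b) ⬝ᵥ C *ᵥ ⇑(hA.eigenvectorBasis b)) := by
  rw [hA.trace_eq_sum_eigenvectorBasis]
  refine sum_congr rfl fun b _ ↦ ?_
  rw [← mulVec_mulVec, hA.mulVec_eigenvectorBasis, mulVec_smul, dotProduct_smul, smul_eq_mul]

theorem PosSemidef.trace_mul_nonneg {B C : Matrix n n ℝ} (hC : C.PosSemidef)
    (hB : B.PosSemidef) : 0 ≤ (C * B).trace := by
  rw [hB.1.trace_mul_eq_sum_eigenvalues_mul]
  exact sum_nonneg fun b _ ↦ mul_nonneg (hB.eigenvalues_nonneg b) <| by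
    simpa using hC.dotProduct_mulVec_nonneg (hB.1.eigenvectorBasis b)

theorem IsHermitian.trace_mul_le_mul_trace {A C : Matrix n n ℝ} (hA : A.IsHermitian)
    (hC : C.PosSemidef) {c : ℝ} (h : ∀ b, hA.eigenvalues b ≤ c) :
    (C * A).trace ≤ c * C.trace := by
  rw [hA.trace_mul_eq_sum_eigenvalues_mul, hA.trace_eq_sum_eigenvectorBasis C, mul_sum]
  gcongr with b
  · simpa using hC.dotProduct_mulVec_nonneg (hA.eigenvectorBasis b)
  · exact h b

theorem IsHermitian.mul_trace_le_trace_mul {A C : Matrix n n ℝ} (hA : A.IsHermitian)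
    (hC : C.PosSemidef) (hker : LinearMap.ker A.mulVecLin ≤ LinearMap.ker C.mulVecLin) {c : ℝ}
    (h : ∀ b, hA.eigenvalues b ≠ 0 → c ≤ hA.eigenvalues b) :
    c * C.trace ≤ (C * A).trace := by
  rw [hA.trace_mul_eq_sum_eigenvalues_mul, hA.trace_eq_sum_eigenvectorBasis C, mul_sum]
  refine sum_le_sum fun b _ ↦ ?_
  by_cases hb : hA.eigenvalues b = 0
  · have hu : C *ᵥ ⇑(hA.eigenvectorBasis b) = 0 :=
      hker <| by simp [hA.mulVec_eigenvectorBasis, hb]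
    simp [hu, hb]
  · exact mul_le_mul_of_nonneg_right (h b hb) <| by
      simpa using hC.dotProduct_mulVec_nonneg (hA.eigenvectorBasis b)

theorem PosSemidef.rank_eq_card_eigenvalues_pos {B : Matrix n n ℝ} (hB : B.PosSemidef)
    (σ : Equiv.Perm n) : B.rank = #{x | 0 < hB.1.eigenvalues (σ x)} := by
  rw [hB.1.rank_eq_card_non_zero_eigs, ← Fintype.card_subtype]
  exact Fintype.card_congr (σ.subtypeEquiv fun x ↦ (hB.eigenvalues_nonneg (σ x)).lt_iff_ne').symm

theorem PosSemidef.sorted_eigenvalue_mul_trace_sub_le {d : ℕ} {A B : Matrix (Fin d) (Fin d) ℝ}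
    (hB : B.PosSemidef) (hAB : (A - B).PosSemidef) {μ : Fin d → ℝ} (hμ : Antitone μ)
    {σ : Equiv.Perm (Fin d)} (hσ : μ = hB.1.eigenvalues ∘ σ) {i : Fin d} (hi : A.rank ≤ i + 1) :
    μ i * (A - B).trace ≤ ((A - B) * B).trace := by
  rcases le_or_gt (μ i) 0 with hμi | hμi
  · exact (mul_nonpos_of_nonpos_of_nonneg hμi hAB.trace_nonneg).trans (hAB.trace_mul_nonneg hB)
  have hker := hB.ker_le_ker_of_posSemidef_sub hAB
  have hrankB : B.rank = #{x | 0 < μ x} := hσ ▸ hB.rank_eq_card_eigenvalues_pos σ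
  have hrankB_le : B.rank ≤ i + 1 := (rank_le_rank_of_ker_le hker).trans hi
  have hrankA_le : A.rank ≤ B.rank := hi.trans (hrankB ▸ hμ.val_add_one_le_card_filter_lt hμi)
  refine hB.1.mul_trace_le_trace_mul hAB (ker_le_ker_sub_of_ker_le hker hrankA_le) fun b hb ↦ ?_
  have hpos : 0 < μ (σ.symm b) := by simpa [hσ] using (hB.eigenvalues_nonneg b).lt_of_ne' hb
  have hbi : σ.symm b ≤ i := by
    have := hrankB ▸ hμ.val_add_one_le_card_filter_lt hpos
    exact Fin.le_def.2 (by omega)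
  simpa [hσ] using hμ hbi

end Matrix

theorem frobenius_diff_trace_bound (d k : ℕ) (A B : Matrix (Fin d) (Fin d) ℝ)
    (hA : A.PosSemidef) (hB : B.PosSemidef) (hAB : (A - B).PosSemidef)
    (hk : A.rank = k)
    (μA μB : Fin d → ℝ) (hμA : Antitone μA) (hμB : Antitone μB)
    (hpA : ∃ σ : Equiv.Perm (Fin d), μA = hA.1.eigenvalues ∘ σ)
    (hpB : ∃ σ : Equiv.Perm (Fin d), μB = hB.1.eigenvalues ∘ σ) :
    ∀ i j : Fin d, (i : ℕ) + 1 = k → (j : ℕ) = 0 →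
      2 * (A - B).trace * μB i ≤ (∑ i', ∑ j', (A i' j') ^ 2) - (∑ i', ∑ j', (B i' j') ^ 2) ∧
      (∑ i', ∑ j', (A i' j') ^ 2) - (∑ i', ∑ j', (B i' j') ^ 2) ≤ 2 * (A - B).trace * μA j := by
  intro i j hi hj
  rw [(isHermitian_iff_isSymm.mp hA.1).sum_sq_eq_trace_mul_self,
    (isHermitian_iff_isSymm.mp hB.1).sum_sq_eq_trace_mul_self, trace_mul_self_sub_trace_mul_self]
  have hCB : (A - B) * B = (A - B) * A - (A - B) * (A - B) := by noncomm_ring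
  have hCB_le_CA : ((A - B) * B).trace ≤ ((A - B) * A).trace := by
    rw [hCB, trace_sub]
    linarith [hAB.trace_mul_nonneg hAB]
  have hupper : ((A - B) * A).trace ≤ μA j * (A - B).trace := by
    obtain ⟨σ, rfl⟩ := hpA
    refine hA.1.trace_mul_le_mul_trace hAB fun b ↦ ?_
    simpa using hμA (show j ≤ σ.symm b from Fin.le_def.2 (by omega))
  obtain ⟨σ, hσ⟩ := hpB
  have hlower := hB.sorted_eigenvalue_mul_trace_sub_le hAB hμB hσ (i := i) (by omega)
  constructor <;> linarith
end

section
/- Let A, B be invertible d×d real matrices with B ⪰ I (i.e., B symmetric with all eigenvalues ≥ 1). Then for every nonzero x ∈ ℝ^d, ‖f_{BA}(x) − f_A(x)‖₂ ≤ ‖B − I‖₂, where f_M(y) := My/‖My‖₂ and ‖·‖₂ on matrices is the operator norm. -/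
/-!
Write `B = 1 + T` with `T = B - 1` positive and put `y = A x`, so that the two points compared are
the normalizations of `y + T y` and of `y`. After scaling `y` to a unit vector `u`, everything
reduces to a planar fact: if `⟪u, v⟫ ≥ 0`, moving `u` to `u + v` and projecting back to the unit
sphere moves it by at most `‖v‖`. Here `v = T u`, which makes an acute angle with `u` because `T` is
positive, and `‖T u‖ ≤ ‖T‖`.
-/

/-- The normalized linear transform `f_A(x) = Ax / ‖Ax‖₂`. -/
noncomputable def forster {d : ℕ} (A : Matrix (Fin d) (Fin d) ℝ)
    (x : EuclideanSpace ℝ (Fin d)) : EuclideanSpace ℝ (Fin d) :=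
  ‖Matrix.toEuclideanLin A x‖⁻¹ • Matrix.toEuclideanLin A x

open scoped RealInnerProductSpace

section
variable {E : Type*} [NormedAddCommGroup E] [InnerProductSpace ℝ E]

theorem norm_inv_norm_smul_add_sub_le {u v : E} (hu : ‖u‖ = 1) (huv : 0 ≤ ⟪u, v⟫) :
    ‖‖u + v‖⁻¹ • (u + v) - u‖ ≤ ‖v‖ := by
  set β := ⟪u, v⟫
  set t := ‖u + v‖
  have hβv : β ≤ ‖v‖ := by simpa [hu] using real_inner_le_norm u v
  have ht_sq : t ^ 2 = 1 + 2 * β + ‖v‖ ^ 2 := by rw [norm_add_sq_real, hu]; ring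
  have ht : 1 ≤ t := by nlinarith [norm_nonneg (u + v), norm_nonneg v]
  have hdist : ‖t⁻¹ • (u + v) - u‖ ^ 2 = 2 - 2 * (1 + β) / t := by
    have hunit : ‖t⁻¹ • (u + v)‖ = 1 := norm_smul_inv_norm (by rw [← norm_pos_iff]; linarith)
    rw [norm_sub_sq_real, hunit, hu, real_inner_smul_left, inner_add_left,
      real_inner_self_eq_norm_sq, hu, real_inner_comm]
    field_simp
    ring
  -- `t - (1 + β) = (‖v‖² - β²) / (t + 1 + β)` and `t (t + 1 + β) ≥ 2`
  have hkey : 2 * (t - (1 + β)) ≤ ‖v‖ ^ 2 * t := by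
    nlinarith [mul_nonneg (sub_nonneg.2 ht) (sq_nonneg ‖v‖), mul_nonneg huv (sq_nonneg ‖v‖)]
  refine le_of_sq_le_sq ?_ (norm_nonneg v)
  rw [hdist, sub_le_comm, le_div_iff₀ (by linarith)]
  linarith

theorem inv_norm_smul_smul_of_pos (w : E) {r : ℝ} (hr : 0 < r) :
    ‖r • w‖⁻¹ • (r • w) = ‖w‖⁻¹ • w := by
  rw [norm_smul, Real.norm_of_nonneg hr.le, smul_smul, mul_inv, mul_right_comm,
    inv_mul_cancel₀ hr.ne', one_mul]

theorem norm_inv_norm_smul_add_sub_inv_norm_smul_le {y v : E} (hy : y ≠ 0) (hyv : 0 ≤ ⟪y, v⟫) :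
    ‖‖y + v‖⁻¹ • (y + v) - ‖y‖⁻¹ • y‖ ≤ ‖v‖ / ‖y‖ := by
  have hr : 0 < ‖y‖⁻¹ := inv_pos.2 (norm_pos_iff.2 hy)
  have hu : ‖‖y‖⁻¹ • y‖ = 1 := by
    rw [norm_smul, norm_inv, norm_norm, inv_mul_cancel₀ (norm_ne_zero_iff.2 hy)]
  have hv : 0 ≤ ⟪‖y‖⁻¹ • y, ‖y‖⁻¹ • v⟫ := by
    rw [real_inner_smul_left, real_inner_smul_right]; positivity
  have h := norm_inv_norm_smul_add_sub_le hu hv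
  rwa [← smul_add, inv_norm_smul_smul_of_pos _ hr, norm_smul, Real.norm_of_nonneg hr.le,
    inv_mul_eq_div] at h

theorem ContinuousLinearMap.IsPositive.norm_inv_norm_smul_add_apply_sub_le {T : E →L[ℝ] E}
    (hT : T.IsPositive) (y : E) :
    ‖‖y + T y‖⁻¹ • (y + T y) - ‖y‖⁻¹ • y‖ ≤ ‖T‖ := by
  rcases eq_or_ne y 0 with rfl | hy
  · simp
  calc _ ≤ ‖T y‖ / ‖y‖ := norm_inv_norm_smul_add_sub_inv_norm_smul_le hy (hT.inner_nonneg_right y)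
    _ ≤ ‖T‖ := div_le_of_le_mul₀ (norm_nonneg _) (norm_nonneg _) (T.le_opNorm y)

end

theorem forster_mul {d : ℕ} (A B : Matrix (Fin d) (Fin d) ℝ) (x : EuclideanSpace ℝ (Fin d)) :
    forster (B * A) x = forster B (Matrix.toEuclideanLin A x) := by
  simp only [forster, Matrix.toLpLin_mul_same, LinearMap.comp_apply]

theorem forster_perturbation_general {d : ℕ} (A B : Matrix (Fin d) (Fin d) ℝ)
    (hBI : (B - 1).PosSemidef)
    (x : EuclideanSpace ℝ (Fin d)) :
    ‖forster (B * A) x - forster A x‖ ≤ ‖Matrix.toEuclideanCLM (𝕜 := ℝ) (n := Fin d) (B - 1)‖ := by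
  set T := Matrix.toEuclideanCLM (𝕜 := ℝ) (n := Fin d) (B - 1)
  have hT : T.IsPositive := Matrix.isPositive_toEuclideanLin_iff.2 hBI
  have hB : ∀ y, Matrix.toEuclideanLin B y = y + T y := fun y => by
    simp [T, ← Matrix.coe_toEuclideanCLM_eq_toEuclideanLin]
  rw [forster_mul, forster, forster, hB]
  exact hT.norm_inv_norm_smul_add_apply_sub_le _

theorem forster_perturbation {d : ℕ} (A B : Matrix (Fin d) (Fin d) ℝ)
    (hA : IsUnit A.det) (hB : IsUnit B.det)
    (hBI : (B - 1).PosSemidef)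
    (x : EuclideanSpace ℝ (Fin d)) (hx : x ≠ 0) :
    ‖forster (B * A) x - forster A x‖ ≤ ‖Matrix.toEuclideanCLM (𝕜 := ℝ) (n := Fin d) (B - 1)‖ :=
  forster_perturbation_general A B hBI x
end

section
/- Let y ∈ ℝ^d be a unit vector, V ⊆ ℝ^d a subspace with ‖P_V y‖₂ = ρ, and α > 0. Writing y' = (I + α P_V)y / ‖(I + α P_V)y‖₂, we have ‖P_V y'‖₂² − ‖P_V y‖₂² ≥ 2αρ²(1−ρ²)/(1+α)². In particular, ‖P_V y'‖₂² − ρ² ≥ αρ²/2 whenever α ≤ 1 and ρ² ≤ 1/2. -/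
open RealInnerProductSpace

theorem aux_alg_pmi (α ρ P : ℝ) (hα : 0 < α) (hρ1 : ρ ^ 2 ≤ 1)
    (hP : P = (1 + α) ^ 2 * ρ ^ 2 / ((1 + α) ^ 2 * ρ ^ 2 + (1 - ρ ^ 2))) :
    P - ρ ^ 2 ≥ 2 * α * ρ ^ 2 * (1 - ρ ^ 2) / (1 + α) ^ 2 ∧
    (α ≤ 1 → ρ ^ 2 ≤ 1 / 2 → P - ρ ^ 2 ≥ α * ρ ^ 2 / 2) := by
  have hNpos : (0:ℝ) < (1 + α) ^ 2 * ρ ^ 2 + (1 - ρ ^ 2) := by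
    nlinarith [mul_nonneg (sq_nonneg ρ) hα.le,
      mul_nonneg (mul_nonneg (sq_nonneg ρ) hα.le) hα.le]
  have key : P - ρ ^ 2 =
      ρ ^ 2 * (1 - ρ ^ 2) * (2 * α + α ^ 2) / ((1 + α) ^ 2 * ρ ^ 2 + (1 - ρ ^ 2)) := by
    rw [hP]
    field_simp
    ring
  have hNle : (1 + α) ^ 2 * ρ ^ 2 + (1 - ρ ^ 2) ≤ (1 + α) ^ 2 := by
    nlinarith [mul_nonneg (mul_nonneg hα.le hα.le) (by linarith : (0:ℝ) ≤ 1 - ρ ^ 2)]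
  constructor
  · rw [key, ge_iff_le, div_le_div_iff₀ (by positivity) hNpos]
    nlinarith [mul_nonneg (mul_nonneg (sq_nonneg ρ) (by nlinarith : (0:ℝ) ≤ 1 - ρ ^ 2)) (sq_nonneg α),
      mul_nonneg (mul_nonneg (sq_nonneg ρ) hα.le) hα.le]
  · intro hα1 hρhalf
    rw [key, ge_iff_le, div_le_div_iff₀ (by norm_num) hNpos]
    nlinarith [sq_nonneg ρ, sq_nonneg α, mul_nonneg (sq_nonneg ρ) hα.le,
      mul_nonneg (mul_nonneg (sq_nonneg ρ) hα.le) hα.le]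

theorem projection_mass_increase {d : ℕ} (V : Submodule ℝ (EuclideanSpace ℝ (Fin d)))
    (y : EuclideanSpace ℝ (Fin d)) (hy : ‖y‖ = 1) (α ρ : ℝ) (hα : 0 < α)
    (hρ : ‖(V.orthogonalProjectionOnto y : EuclideanSpace ℝ (Fin d))‖ = ρ)
    (y' : EuclideanSpace ℝ (Fin d))
    (hy' : y' = ‖y + α • (V.orthogonalProjectionOnto y : EuclideanSpace ℝ (Fin d))‖⁻¹ •
      (y + α • (V.orthogonalProjectionOnto y : EuclideanSpace ℝ (Fin d)))) :
    ‖(V.orthogonalProjectionOnto y' : EuclideanSpace ℝ (Fin d))‖ ^ 2 - ρ ^ 2 ≥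
      2 * α * ρ ^ 2 * (1 - ρ ^ 2) / (1 + α) ^ 2 ∧
    (α ≤ 1 → ρ ^ 2 ≤ 1 / 2 →
      ‖(V.orthogonalProjectionOnto y' : EuclideanSpace ℝ (Fin d))‖ ^ 2 - ρ ^ 2 ≥ α * ρ ^ 2 / 2) := by
  set p : EuclideanSpace ℝ (Fin d) := (V.orthogonalProjectionOnto y : EuclideanSpace ℝ (Fin d)) with hp
  have hpV : p ∈ V := (V.orthogonalProjectionOnto y).2
  have hqV : y - p ∈ Vᗮ := V.sub_starProjection_mem_orthogonal y
  -- orthogonality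
  have hinner : ⟪p, y - p⟫ = 0 :=
    Submodule.inner_right_of_mem_orthogonal hpV hqV
  -- ‖y - p‖² = 1 - ρ²
  have hsplit : ‖y - p‖ ^ 2 = 1 - ρ ^ 2 := by
    have : ‖p + (y - p)‖ ^ 2 = ‖p‖ ^ 2 + 2 * ⟪p, y - p⟫ + ‖y - p‖ ^ 2 :=
      norm_add_sq_real p (y - p)
    rw [add_sub_cancel, hy, hρ, hinner] at this
    nlinarith
  have hρ1 : ρ ^ 2 ≤ 1 := by nlinarith [sq_nonneg ‖y - p‖, hsplit]
  set v : EuclideanSpace ℝ (Fin d) := y + α • p with hv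
  have hvdecomp : v = (1 + α) • p + (y - p) := by
    rw [hv]; module
  have hinner2 : ⟪(1 + α) • p, y - p⟫ = 0 := by
    rw [real_inner_smul_left, hinner]; ring
  have hvnorm : ‖v‖ ^ 2 = (1 + α) ^ 2 * ρ ^ 2 + (1 - ρ ^ 2) := by
    rw [hvdecomp]
    have := norm_add_sq_real ((1 + α) • p) (y - p)
    rw [hinner2, norm_smul, hρ] at this
    rw [this, hsplit]
    have h1 : (0:ℝ) ≤ 1 + α := by linarith
    rw [Real.norm_eq_abs, abs_of_nonneg h1]
    ring
  have hN1 : 1 ≤ ‖v‖ ^ 2 := by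
    rw [hvnorm]
    nlinarith [mul_nonneg (sq_nonneg ρ) hα.le, mul_nonneg (mul_nonneg (sq_nonneg ρ) hα.le) hα.le]
  have hNpos : 0 < ‖v‖ := by nlinarith [norm_nonneg v]
  -- projection of y'
  have hpp : (V.orthogonalProjectionOnto p : EuclideanSpace ℝ (Fin d)) = p :=
    V.starProjection_eq_self_iff.mpr hpV
  have hq0 : V.orthogonalProjectionOnto (y - p) = 0 :=
    Submodule.orthogonalProjectionOnto_apply_of_mem_orthogonal hqV
  have hprojv : (V.orthogonalProjectionOnto v : EuclideanSpace ℝ (Fin d)) = (1 + α) • p := by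
    rw [hvdecomp, map_add, map_smul, hq0]
    push_cast
    rw [hpp]
    simp
  have hproj : (V.orthogonalProjectionOnto y' : EuclideanSpace ℝ (Fin d)) =
      (‖v‖⁻¹ * (1 + α)) • p := by
    rw [hy', map_smul]
    push_cast
    rw [hprojv, smul_smul]
  have hnormproj : ‖(V.orthogonalProjectionOnto y' : EuclideanSpace ℝ (Fin d))‖ ^ 2 =
      (1 + α) ^ 2 * ρ ^ 2 / ((1 + α) ^ 2 * ρ ^ 2 + (1 - ρ ^ 2)) := by
    rw [hproj, norm_smul, Real.norm_eq_abs, hρ,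
      abs_of_nonneg (by positivity : (0:ℝ) ≤ ‖v‖⁻¹ * (1 + α)), mul_pow, mul_pow, ← hvnorm]
    field_simp
  exact aux_alg_pmi α ρ _ hα hρ1 hnormproj
end

section
/- Let y ∈ ℝ^d be a unit vector, V a subspace, α > 0, and y' = (I + α P_V)y/‖(I + α P_V)y‖₂. Then ‖P_V y' (P_{V^⊥} y')ᵀ − P_V y (P_{V^⊥} y)ᵀ‖_F ≤ α·‖P_V y‖₂·‖P_{V^⊥} y‖₂. In particular, this is at most α·ρ·√(1−ρ²) ≤ αρ where ρ = ‖P_V y‖₂. -/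
/-!
With `N = ‖y + α P_V y‖`, the normalized vector has `P_V y' = ((1 + α) / N) P_V y` and
`P_{V^⊥} y' = P_{V^⊥} y / N`, so the cross term is multiplied by `(1 + α) / N²` and the
difference is `((1 + α) / N² - 1) P_V y (P_{V^⊥} y)ᵀ`. Pythagoras gives `N ≥ ‖y‖ = 1` and the
triangle inequality gives `N ≤ 1 + α`, which confine that factor to `[-α, α]`.
-/

open Matrix

section OuterProduct

variable {ι : Type*}

theorem vecMulVec_smul_sub_vecMulVec (u w : EuclideanSpace ℝ ι) (a b : ℝ) :
    vecMulVec ⇑(a • u) ⇑(b • w) - vecMulVec u w = vecMulVec ⇑((a * b - 1) • u) w := by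
  ext i j
  simp only [Matrix.sub_apply, vecMulVec_apply, WithLp.ofLp_smul, Pi.smul_apply, smul_eq_mul]
  ring

variable [Fintype ι]

theorem sum_sum_vecMulVec_sq (u w : EuclideanSpace ℝ ι) :
    ∑ i, ∑ j, vecMulVec u w i j ^ 2 = (‖u‖ * ‖w‖) ^ 2 := by
  simp only [mul_pow, EuclideanSpace.real_norm_sq_eq, Finset.sum_mul_sum, vecMulVec_apply]

theorem sqrt_sum_sum_vecMulVec_sq (u w : EuclideanSpace ℝ ι) :
    √(∑ i, ∑ j, vecMulVec u w i j ^ 2) = ‖u‖ * ‖w‖ := by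
  rw [sum_sum_vecMulVec_sq, Real.sqrt_sq (by positivity)]

end OuterProduct

theorem abs_div_sq_sub_one_le {α s : ℝ} (hα : 0 ≤ α) (h1 : 1 ≤ s) (h2 : s ≤ 1 + α) :
    |(1 + α) / s ^ 2 - 1| ≤ α := by
  have hpos : 0 < 1 + α := by linarith
  have hupper : (1 + α) / s ^ 2 ≤ 1 + α := div_le_self hpos.le (one_le_pow₀ h1)
  have hlower : 1 - α ≤ (1 + α) / s ^ 2 :=
    calc 1 - α ≤ (1 + α)⁻¹ := by rw [← one_div, le_div_iff₀ hpos]; nlinarith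
      _ = (1 + α) / (1 + α) ^ 2 := by field_simp
      _ ≤ (1 + α) / s ^ 2 := by gcongr
  rw [abs_sub_le_iff]
  constructor <;> linarith

namespace Submodule

variable {E : Type*} [NormedAddCommGroup E] [InnerProductSpace ℝ E]
  (K : Submodule ℝ E) [K.HasOrthogonalProjection]

theorem starProjection_add_smul_starProjection (α : ℝ) (y : E) :
    K.starProjection (y + α • K.starProjection y) = (1 + α) • K.starProjection y := by
  rw [map_add, map_smul, K.starProjection_eq_self_iff.2 (K.starProjection_apply_mem y)]
  module

theorem starProjection_orthogonal_add_smul_starProjection (α : ℝ) (y : E) :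
    Kᗮ.starProjection (y + α • K.starProjection y) = Kᗮ.starProjection y := by
  rw [map_add, map_smul, starProjection_orthogonal_apply_eq_zero (K.starProjection_apply_mem y),
    smul_zero, add_zero]

theorem norm_add_smul_starProjection_sq (α : ℝ) (y : E) :
    ‖y + α • K.starProjection y‖ ^ 2 =
      (1 + α) ^ 2 * ‖K.starProjection y‖ ^ 2 + ‖Kᗮ.starProjection y‖ ^ 2 := by
  rw [K.norm_sq_eq_add_norm_sq_starProjection, starProjection_add_smul_starProjection,
    starProjection_orthogonal_add_smul_starProjection, norm_smul, mul_pow, Real.norm_eq_abs,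
    sq_abs]

theorem norm_le_norm_add_smul_starProjection {α : ℝ} (hα : 0 ≤ α) (y : E) :
    ‖y‖ ≤ ‖y + α • K.starProjection y‖ := by
  rw [← sq_le_sq₀ (norm_nonneg _) (norm_nonneg _), K.norm_sq_eq_add_norm_sq_starProjection y,
    norm_add_smul_starProjection_sq]
  gcongr
  exact le_mul_of_one_le_left (sq_nonneg _) (one_le_pow₀ (by linarith))

theorem norm_add_smul_starProjection_le {α : ℝ} (hα : 0 ≤ α) (y : E) :
    ‖y + α • K.starProjection y‖ ≤ (1 + α) * ‖y‖ :=
  calc ‖y + α • K.starProjection y‖ ≤ ‖y‖ + α * ‖K.starProjection y‖ := by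
        grw [norm_add_le, norm_smul, Real.norm_of_nonneg hα]
    _ ≤ ‖y‖ + α * ‖y‖ := by grw [K.norm_starProjection_apply_le]
    _ = (1 + α) * ‖y‖ := by ring

theorem norm_starProjection_orthogonal_eq_sqrt (y : E) :
    ‖Kᗮ.starProjection y‖ = √(‖y‖ ^ 2 - ‖K.starProjection y‖ ^ 2) := by
  rw [K.norm_sq_eq_add_norm_sq_starProjection y, add_sub_cancel_left, Real.sqrt_sq (norm_nonneg _)]

end Submodule

theorem cross_term_bound {d : ℕ} (V : Submodule ℝ (EuclideanSpace ℝ (Fin d)))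
    (y : EuclideanSpace ℝ (Fin d)) (hy : ‖y‖ = 1) (α ρ : ℝ) (hα : 0 < α)
    (hρ : ‖(Submodule.orthogonalProjectionOnto V y : EuclideanSpace ℝ (Fin d))‖ = ρ)
    (y' : EuclideanSpace ℝ (Fin d))
    (hy' : y' = ‖y + α • (Submodule.orthogonalProjectionOnto V y : EuclideanSpace ℝ (Fin d))‖⁻¹ •
      (y + α • (Submodule.orthogonalProjectionOnto V y : EuclideanSpace ℝ (Fin d)))) :
    Real.sqrt (∑ i, ∑ j,
      ((Matrix.vecMulVec (Submodule.orthogonalProjectionOnto V y' : EuclideanSpace ℝ (Fin d))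
          (Submodule.orthogonalProjectionOnto Vᗮ y' : EuclideanSpace ℝ (Fin d)) -
        Matrix.vecMulVec (Submodule.orthogonalProjectionOnto V y : EuclideanSpace ℝ (Fin d))
          (Submodule.orthogonalProjectionOnto Vᗮ y : EuclideanSpace ℝ (Fin d))) i j) ^ 2) ≤
      α * ‖(Submodule.orthogonalProjectionOnto V y : EuclideanSpace ℝ (Fin d))‖ *
        ‖(Submodule.orthogonalProjectionOnto Vᗮ y : EuclideanSpace ℝ (Fin d))‖ ∧
    α * ‖(Submodule.orthogonalProjectionOnto V y : EuclideanSpace ℝ (Fin d))‖ *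
        ‖(Submodule.orthogonalProjectionOnto Vᗮ y : EuclideanSpace ℝ (Fin d))‖ ≤
      α * ρ * Real.sqrt (1 - ρ ^ 2) ∧
    α * ρ * Real.sqrt (1 - ρ ^ 2) ≤ α * ρ := by
  simp only [← Submodule.starProjection_apply] at hρ hy' ⊢
  set N := ‖y + α • V.starProjection y‖
  have hN1 : 1 ≤ N := hy ▸ V.norm_le_norm_add_smul_starProjection hα.le y
  have hN2 : N ≤ 1 + α := by simpa only [hy, mul_one] using V.norm_add_smul_starProjection_le hα.le y
  have hPy' : V.starProjection y' = (N⁻¹ * (1 + α)) • V.starProjection y := by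
    rw [hy', map_smul, V.starProjection_add_smul_starProjection, smul_smul]
  have hQy' : Vᗮ.starProjection y' = N⁻¹ • Vᗮ.starProjection y := by
    rw [hy', map_smul, V.starProjection_orthogonal_add_smul_starProjection]
  have hQy : ‖Vᗮ.starProjection y‖ = √(1 - ρ ^ 2) := by
    rw [V.norm_starProjection_orthogonal_eq_sqrt, hy, hρ, one_pow]
  have hρ0 : 0 ≤ ρ := hρ ▸ norm_nonneg _
  refine ⟨?_, by rw [hρ, hQy], ?_⟩
  · rw [hPy', hQy', vecMulVec_smul_sub_vecMulVec, sqrt_sum_sum_vecMulVec_sq, norm_smul,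
      Real.norm_eq_abs, show N⁻¹ * (1 + α) * N⁻¹ = (1 + α) / N ^ 2 by ring, mul_assoc, mul_assoc]
    exact mul_le_mul_of_nonneg_right (abs_div_sq_sub_one_le hα.le hN1 hN2) (by positivity)
  · exact mul_le_of_le_one_right (by positivity) (Real.sqrt_le_one.2 (by nlinarith))
end

section
/- Let A be a full-rank d×d real matrix with positive smallest singular value σ_d(A), let ε ∈ (0,1), and let σ̄ satisfy σ_d(A)/2 ≤ σ̄ ≤ σ_d(A). Let Â be obtained by rounding each entry of (d/(σ̄ε))·A to the nearest integer. Then: (i) the condition number satisfies κ(Â) ≤ κ(A)(1 + 4ε); (ii) for all nonzero x ∈ ℝ^d, ‖f_A(x) − f_Â(x)‖₂ ≤ 2ε; and (iii) every entry of Â has magnitude O(d·κ(A)/ε). -/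
/-- The largest singular value of `A`, i.e. its `ℓ₂` operator norm. -/
noncomputable def sigmaMax {d : ℕ} (A : Matrix (Fin d) (Fin d) ℝ) : ℝ :=
  ‖Matrix.toEuclideanCLM (𝕜 := ℝ) (n := Fin d) A‖

/-- The smallest singular value of an invertible matrix `A`, namely `1 / ‖A⁻¹‖_op`. -/
noncomputable def sigmaMin {d : ℕ} (A : Matrix (Fin d) (Fin d) ℝ) : ℝ :=
  (sigmaMax A⁻¹)⁻¹

/-- The condition number `κ(A) = σ_max(A) / σ_min(A)`. -/
noncomputable def condNum {d : ℕ} (A : Matrix (Fin d) (Fin d) ℝ) : ℝ :=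
  sigmaMax A * sigmaMax A⁻¹

/-!
Scaling by `s = d / (σ̄ ε)` changes neither `f_A` nor `κ(A)` and multiplies the singular values
by `s`, so `σ_min(sA) = s σ_min(A)` lies in `[d/ε, 2d/ε]`. Rounding perturbs `sA` by a matrix with
entries in `[-1/2, 1/2]`, of operator norm `δ ≤ d/2 ≤ ε σ_min(sA) / 2`. Hence
`σ_max(Â) ≤ σ_max(sA) + δ` and `σ_min(Â) ≥ σ_min(sA) - δ`, which gives (i), and (iii) because
every entry is bounded by `σ_max`. For (ii), normalization `u ↦ u / ‖u‖` is `2 / ‖u‖`-Lipschitz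
at `u`, and `‖sAx‖ ≥ σ_min(sA) ‖x‖`.
-/

open Matrix

theorem norm_inv_norm_smul_sub_inv_norm_smul_le {E : Type*} [NormedAddCommGroup E]
    [NormedSpace ℝ E] {u : E} (hu : u ≠ 0) (v : E) :
    ‖‖u‖⁻¹ • u - ‖v‖⁻¹ • v‖ ≤ 2 * ‖u - v‖ / ‖u‖ := by
  have hu : 0 < ‖u‖ := norm_pos_iff.2 hu
  have hsplit : ‖u‖⁻¹ • u - ‖v‖⁻¹ • v = ‖u‖⁻¹ • (u - v) + (‖u‖⁻¹ - ‖v‖⁻¹) • v := by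
    rw [smul_sub, sub_smul]; abel
  have hscale : |‖u‖⁻¹ - ‖v‖⁻¹| * ‖v‖ ≤ ‖u - v‖ / ‖u‖ := by
    rcases eq_or_ne v 0 with rfl | hv
    · simp only [norm_zero, mul_zero]; positivity
    have hv : 0 < ‖v‖ := norm_pos_iff.2 hv
    rw [inv_sub_inv hu.ne' hv.ne', abs_div, abs_of_pos (mul_pos hu hv), div_mul_eq_mul_div,
      mul_div_mul_right _ _ hv.ne', abs_sub_comm]
    gcongr
    exact abs_norm_sub_norm_le u v
  calc ‖‖u‖⁻¹ • u - ‖v‖⁻¹ • v‖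
      ≤ ‖u‖⁻¹ * ‖u - v‖ + |‖u‖⁻¹ - ‖v‖⁻¹| * ‖v‖ := by
        rw [hsplit]
        refine (norm_add_le _ _).trans_eq ?_
        rw [norm_smul, norm_smul, Real.norm_eq_abs, Real.norm_eq_abs, abs_inv, abs_norm]
    _ ≤ 2 * ‖u - v‖ / ‖u‖ := by rw [inv_mul_eq_div, mul_div_assoc]; linarith

theorem EuclideanSpace.norm_le_sqrt_card_mul {n : Type*} [Fintype n] {y : EuclideanSpace ℝ n}
    {c : ℝ} (h : ∀ i, |y i| ≤ c) : ‖y‖ ≤ √(Fintype.card n) * c := by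
  rcases isEmpty_or_nonempty n with hn | ⟨⟨i⟩⟩
  · simp [Subsingleton.elim y 0]
  have hc : 0 ≤ c := (abs_nonneg _).trans (h i)
  rw [EuclideanSpace.norm_eq, ← Real.sqrt_sq hc, ← Real.sqrt_mul (Nat.cast_nonneg _)]
  gcongr
  calc ∑ i, ‖y i‖ ^ 2 ≤ ∑ _i : n, c ^ 2 := by
        gcongr with i
        rw [Real.norm_eq_abs]
        exact h i
    _ = _ := by simp

section MatrixNorm

variable {n : Type*} [Fintype n] [DecidableEq n]

theorem Matrix.norm_toEuclideanCLM_le_card_mul {M : Matrix n n ℝ} {c : ℝ}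
    (h : ∀ i j, |M i j| ≤ c) : ‖toEuclideanCLM (𝕜 := ℝ) M‖ ≤ Fintype.card n * c := by
  rcases isEmpty_or_nonempty n with hn | ⟨⟨i⟩⟩
  · simp [Subsingleton.elim (toEuclideanCLM (𝕜 := ℝ) M) 0]
  have hc : 0 ≤ c := (abs_nonneg _).trans (h i i)
  refine ContinuousLinearMap.opNorm_le_bound _ (by positivity) fun x => ?_
  have hrow : ∀ i, |toEuclideanCLM (𝕜 := ℝ) M x i| ≤ √(Fintype.card n) * c * ‖x‖ := fun i =>
    calc |toEuclideanCLM (𝕜 := ℝ) M x i| = |inner ℝ (WithLp.toLp 2 (M i)) x| := by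
          simp [EuclideanSpace.inner_eq_star_dotProduct, mulVec, dotProduct_comm]
      _ ≤ ‖WithLp.toLp 2 (M i)‖ * ‖x‖ := abs_real_inner_le_norm _ _
      _ ≤ √(Fintype.card n) * c * ‖x‖ := by
          gcongr
          exact EuclideanSpace.norm_le_sqrt_card_mul (h i)
  calc ‖toEuclideanCLM (𝕜 := ℝ) M x‖ ≤ √(Fintype.card n) * (√(Fintype.card n) * c * ‖x‖) :=
        EuclideanSpace.norm_le_sqrt_card_mul hrow
    _ = Fintype.card n * c * ‖x‖ := by
        rw [← mul_assoc, ← mul_assoc, Real.mul_self_sqrt (Nat.cast_nonneg _)]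

theorem Matrix.abs_apply_le_norm_toEuclideanCLM (M : Matrix n n ℝ) (i j : n) :
    |M i j| ≤ ‖toEuclideanCLM (𝕜 := ℝ) M‖ :=
  calc |M i j| = |toEuclideanCLM (𝕜 := ℝ) M (EuclideanSpace.single j 1) i| := by simp
    _ ≤ ‖toEuclideanCLM (𝕜 := ℝ) M (EuclideanSpace.single j 1)‖ := by
        simpa using PiLp.norm_apply_le (toEuclideanCLM (𝕜 := ℝ) M (EuclideanSpace.single j 1)) i
    _ ≤ ‖toEuclideanCLM (𝕜 := ℝ) M‖ := by
        simpa using (toEuclideanCLM (𝕜 := ℝ) M).le_opNorm (EuclideanSpace.single j 1)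

theorem Matrix.toEuclideanCLM_inv_apply_toEuclideanCLM {A : Matrix n n ℝ}
    (hA : IsUnit A.det) (x : EuclideanSpace ℝ n) :
    toEuclideanCLM (𝕜 := ℝ) A⁻¹ (toEuclideanCLM (𝕜 := ℝ) A x) = x :=
  WithLp.ofLp_injective 2 (by simp [mulVec_mulVec, nonsing_inv_mul A hA])

theorem Matrix.toEuclideanCLM_apply_toEuclideanCLM_inv {A : Matrix n n ℝ}
    (hA : IsUnit A.det) (x : EuclideanSpace ℝ n) :
    toEuclideanCLM (𝕜 := ℝ) A (toEuclideanCLM (𝕜 := ℝ) A⁻¹ x) = x :=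
  WithLp.ofLp_injective 2 (by simp [mulVec_mulVec, mul_nonsing_inv A hA])

theorem Matrix.isUnit_det_of_mul_norm_le {A : Matrix n n ℝ} {c : ℝ} (hc : 0 < c)
    (h : ∀ x, c * ‖x‖ ≤ ‖toEuclideanCLM (𝕜 := ℝ) A x‖) : IsUnit A.det := by
  rw [← isUnit_iff_isUnit_det, ← mulVec_injective_iff_isUnit]
  refine (injective_iff_map_eq_zero (mulVecLin A)).2 fun v hv => ?_
  have hle := h (WithLp.toLp 2 v)
  rw [toEuclideanCLM_toLp, ← mulVecLin_apply, hv, WithLp.toLp_zero, norm_zero, mul_comm] at hle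
  simpa using nonpos_of_mul_nonpos_left hle hc

end MatrixNorm

section SingularValues

variable {d : ℕ}

theorem sigmaMax_fin_zero (A : Matrix (Fin 0) (Fin 0) ℝ) : sigmaMax A = 0 := by
  simp [sigmaMax, Subsingleton.elim (toEuclideanCLM (𝕜 := ℝ) A) 0]

theorem sigmaMax_nonneg (A : Matrix (Fin d) (Fin d) ℝ) : 0 ≤ sigmaMax A :=
  norm_nonneg _

theorem sigmaMax_smul (s : ℝ) (A : Matrix (Fin d) (Fin d) ℝ) :
    sigmaMax (s • A) = |s| * sigmaMax A := by
  rw [sigmaMax, sigmaMax, map_smul, norm_smul, Real.norm_eq_abs]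

theorem norm_apply_le_sigmaMax (A : Matrix (Fin d) (Fin d) ℝ) (x : EuclideanSpace ℝ (Fin d)) :
    ‖toEuclideanCLM (𝕜 := ℝ) A x‖ ≤ sigmaMax A * ‖x‖ :=
  (toEuclideanCLM (𝕜 := ℝ) A).le_opNorm x

theorem sigmaMax_le_add_sigmaMax_sub (A B : Matrix (Fin d) (Fin d) ℝ) :
    sigmaMax B ≤ sigmaMax A + sigmaMax (B - A) := by
  simpa [sigmaMax] using norm_le_insert' (toEuclideanCLM (𝕜 := ℝ) B) (toEuclideanCLM (𝕜 := ℝ) A)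

theorem sigmaMin_mul_norm_le {A : Matrix (Fin d) (Fin d) ℝ} (hA : IsUnit A.det)
    (x : EuclideanSpace ℝ (Fin d)) : sigmaMin A * ‖x‖ ≤ ‖toEuclideanCLM (𝕜 := ℝ) A x‖ := by
  have hx : ‖x‖ ≤ sigmaMax A⁻¹ * ‖toEuclideanCLM (𝕜 := ℝ) A x‖ := by
    simpa [toEuclideanCLM_inv_apply_toEuclideanCLM hA]
      using norm_apply_le_sigmaMax A⁻¹ (toEuclideanCLM (𝕜 := ℝ) A x)
  rcases (sigmaMax_nonneg A⁻¹).eq_or_lt with h0 | h0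
  · simp [sigmaMin, ← h0]
  · rwa [sigmaMin, inv_mul_le_iff₀ h0]

theorem sigmaMax_inv_le_of_mul_norm_le {A : Matrix (Fin d) (Fin d) ℝ} (hA : IsUnit A.det)
    {c : ℝ} (hc : 0 < c) (h : ∀ x, c * ‖x‖ ≤ ‖toEuclideanCLM (𝕜 := ℝ) A x‖) :
    sigmaMax A⁻¹ ≤ c⁻¹ := by
  refine ContinuousLinearMap.opNorm_le_bound _ (by positivity) fun y => ?_
  have := h (toEuclideanCLM (𝕜 := ℝ) A⁻¹ y)
  rw [toEuclideanCLM_apply_toEuclideanCLM_inv hA] at this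
  rwa [inv_mul_eq_div, le_div_iff₀' hc]

theorem condNum_eq_div (A : Matrix (Fin d) (Fin d) ℝ) : condNum A = sigmaMax A / sigmaMin A := by
  rw [condNum, sigmaMin, div_inv_eq_mul]

theorem sigmaMin_smul {s : ℝ} (hs : s ≠ 0) {A : Matrix (Fin d) (Fin d) ℝ} (hA : IsUnit A.det) :
    sigmaMin (s • A) = |s| * sigmaMin A := by
  have hinv : (s • A)⁻¹ = s⁻¹ • A⁻¹ :=
    inv_eq_left_inv (by simp [smul_smul, hs, nonsing_inv_mul A hA])
  rw [sigmaMin, sigmaMin, hinv, sigmaMax_smul, mul_inv, abs_inv, inv_inv]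

theorem condNum_smul {s : ℝ} (hs : s ≠ 0) {A : Matrix (Fin d) (Fin d) ℝ} (hA : IsUnit A.det) :
    condNum (s • A) = condNum A := by
  rw [condNum_eq_div, condNum_eq_div, sigmaMax_smul, sigmaMin_smul hs hA,
    mul_div_mul_left _ _ (abs_ne_zero.2 hs)]

variable [NeZero d]

theorem sigmaMin_pos {A : Matrix (Fin d) (Fin d) ℝ} (hA : IsUnit A.det) : 0 < sigmaMin A := by
  have hinv : A⁻¹ ≠ 0 := fun h0 => by simpa [h0] using mul_nonsing_inv A hA
  exact inv_pos.2 (norm_pos_iff.2 ((map_ne_zero_iff _ (toEuclideanCLM).injective).2 hinv))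

theorem sigmaMin_le_sigmaMax {A : Matrix (Fin d) (Fin d) ℝ} (hA : IsUnit A.det) :
    sigmaMin A ≤ sigmaMax A := by
  have hx : ‖EuclideanSpace.single (0 : Fin d) (1 : ℝ)‖ = 1 := by simp
  simpa [hx] using (sigmaMin_mul_norm_le hA _).trans (norm_apply_le_sigmaMax A
    (EuclideanSpace.single (0 : Fin d) (1 : ℝ)))

theorem one_le_condNum {A : Matrix (Fin d) (Fin d) ℝ} (hA : IsUnit A.det) : 1 ≤ condNum A := by
  rw [condNum_eq_div, one_le_div (sigmaMin_pos hA)]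
  exact sigmaMin_le_sigmaMax hA

theorem condNum_mul_sigmaMin {A : Matrix (Fin d) (Fin d) ℝ} (hA : IsUnit A.det) :
    condNum A * sigmaMin A = sigmaMax A := by
  rw [condNum_eq_div, div_mul_cancel₀ _ (sigmaMin_pos hA).ne']

theorem mul_sigmaMin_smul_mem_Icc {A : Matrix (Fin d) (Fin d) ℝ} (hA : IsUnit A.det)
    {ε σbar : ℝ} (hε : 0 < ε) (h₁ : sigmaMin A / 2 ≤ σbar) (h₂ : σbar ≤ sigmaMin A) :
    ε * sigmaMin ((d / (σbar * ε)) • A) ∈ Set.Icc (d : ℝ) (2 * d) := by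
  have hσ := sigmaMin_pos hA
  have hσbar : 0 < σbar := by linarith
  have hd : (0 : ℝ) < d := Nat.cast_pos.2 (NeZero.pos d)
  have hs : 0 < (d : ℝ) / (σbar * ε) := by positivity
  have hscaled : ε * sigmaMin ((d / (σbar * ε)) • A) = d * sigmaMin A / σbar := by
    rw [sigmaMin_smul hs.ne' hA, abs_of_pos hs]; field_simp
  rw [hscaled, Set.mem_Icc, le_div_iff₀ hσbar, div_le_iff₀ hσbar]
  constructor <;> nlinarith

end SingularValues

theorem add_div_sub_le_mul_one_add_four_mul {κ σ δ ε : ℝ} (hκ : 1 ≤ κ) (hε : ε < 1) (hσ : 0 < σ)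
    (hδ : 0 ≤ δ) (hδσ : 2 * δ ≤ ε * σ) : (κ * σ + δ) / (σ - δ) ≤ κ * (1 + 4 * ε) := by
  have hε₀ : 0 ≤ ε := nonneg_of_mul_nonneg_left (by linarith) hσ
  rw [div_le_iff₀ (by nlinarith)]
  nlinarith [mul_le_mul_of_nonneg_left hδσ (by nlinarith : (0 : ℝ) ≤ 1 + κ + 4 * κ * ε),
    mul_nonneg (sub_nonneg.2 hκ) hδ, mul_nonneg (mul_nonneg hε₀ hσ.le) (sub_nonneg.2 hκ),
    mul_nonneg (mul_nonneg hε₀ hδ) (sub_nonneg.2 hκ)]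

section Perturbation

variable {d : ℕ} {A B : Matrix (Fin d) (Fin d) ℝ} {δ : ℝ}

theorem mul_norm_le_of_sigmaMax_sub_le (hA : IsUnit A.det) (hδ : sigmaMax (B - A) ≤ δ)
    (x : EuclideanSpace ℝ (Fin d)) :
    (sigmaMin A - δ) * ‖x‖ ≤ ‖toEuclideanCLM (𝕜 := ℝ) B x‖ := by
  have hBA : ‖toEuclideanCLM (𝕜 := ℝ) (B - A) x‖ ≤ δ * ‖x‖ :=
    (norm_apply_le_sigmaMax _ x).trans (by gcongr)
  have hsplit : toEuclideanCLM (𝕜 := ℝ) A x =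
      toEuclideanCLM (𝕜 := ℝ) B x - toEuclideanCLM (𝕜 := ℝ) (B - A) x := by
    simp
  have := sigmaMin_mul_norm_le hA x
  rw [hsplit] at this
  linarith [norm_sub_le (toEuclideanCLM (𝕜 := ℝ) B x) (toEuclideanCLM (𝕜 := ℝ) (B - A) x)]

theorem condNum_le_of_sigmaMax_sub_le (hA : IsUnit A.det) (hδ : sigmaMax (B - A) ≤ δ)
    (hδA : δ < sigmaMin A) : condNum B ≤ (sigmaMax A + δ) / (sigmaMin A - δ) := by
  have hpos : 0 < sigmaMin A - δ := sub_pos.2 hδA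
  have hlow := mul_norm_le_of_sigmaMax_sub_le hA hδ
  rw [condNum, div_eq_mul_inv]
  refine mul_le_mul ((sigmaMax_le_add_sigmaMax_sub A B).trans (by gcongr))
    (sigmaMax_inv_le_of_mul_norm_le (isUnit_det_of_mul_norm_le hpos hlow) hpos hlow)
    (sigmaMax_nonneg _) ?_
  linarith [sigmaMax_nonneg A, sigmaMax_nonneg (B - A)]

theorem norm_forster_sub_le (hA : IsUnit A.det) (hδ : sigmaMax (B - A) ≤ δ)
    (hσ : 0 < sigmaMin A) {x : EuclideanSpace ℝ (Fin d)} (hx : x ≠ 0) :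
    ‖forster A x - forster B x‖ ≤ 2 * δ / sigmaMin A := by
  have hx : 0 < ‖x‖ := norm_pos_iff.2 hx
  have hδ0 : 0 ≤ δ := (sigmaMax_nonneg _).trans hδ
  have hAx : sigmaMin A * ‖x‖ ≤ ‖toEuclideanCLM (𝕜 := ℝ) A x‖ := sigmaMin_mul_norm_le hA x
  have hAx0 : toEuclideanCLM (𝕜 := ℝ) A x ≠ 0 := norm_pos_iff.1 ((mul_pos hσ hx).trans_le hAx)
  have hdiff : ‖toEuclideanCLM (𝕜 := ℝ) A x - toEuclideanCLM (𝕜 := ℝ) B x‖ ≤ δ * ‖x‖ := by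
    rw [norm_sub_rev, ← _root_.sub_apply, ← map_sub]
    exact (norm_apply_le_sigmaMax _ x).trans (by gcongr)
  calc ‖forster A x - forster B x‖
      ≤ 2 * ‖toEuclideanCLM (𝕜 := ℝ) A x - toEuclideanCLM (𝕜 := ℝ) B x‖ /
          ‖toEuclideanCLM (𝕜 := ℝ) A x‖ :=
        norm_inv_norm_smul_sub_inv_norm_smul_le hAx0 _
    _ ≤ 2 * (δ * ‖x‖) / (sigmaMin A * ‖x‖) := by gcongr
    _ = 2 * δ / sigmaMin A := by field_simp

theorem abs_apply_le_sigmaMax_add (hδ : sigmaMax (B - A) ≤ δ) (i j : Fin d) :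
    |B i j| ≤ sigmaMax A + δ :=
  (abs_apply_le_norm_toEuclideanCLM B i j).trans
    ((sigmaMax_le_add_sigmaMax_sub A B).trans (by gcongr))

theorem condNum_le_mul_one_add_four_mul [NeZero d] (hA : IsUnit A.det) {ε : ℝ} (hε : ε < 1)
    (hδ : sigmaMax (B - A) ≤ δ) (hδσ : 2 * δ ≤ ε * sigmaMin A) :
    condNum B ≤ condNum A * (1 + 4 * ε) := by
  have hσ := sigmaMin_pos hA
  have hδ₀ : 0 ≤ δ := (sigmaMax_nonneg _).trans hδ
  calc condNum B ≤ (sigmaMax A + δ) / (sigmaMin A - δ) :=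
        condNum_le_of_sigmaMax_sub_le hA hδ (by nlinarith)
    _ = (condNum A * sigmaMin A + δ) / (sigmaMin A - δ) := by rw [condNum_mul_sigmaMin hA]
    _ ≤ condNum A * (1 + 4 * ε) :=
        add_div_sub_le_mul_one_add_four_mul (one_le_condNum hA) hε hσ hδ₀ hδσ

end Perturbation

theorem forster_smul {d : ℕ} {s : ℝ} (hs : 0 < s) (A : Matrix (Fin d) (Fin d) ℝ) :
    forster (s • A) = forster A := by
  ext1 x
  rcases eq_or_ne (toEuclideanLin A x) 0 with h | h
  · simp [forster, h]
  · simp only [forster, map_smul, LinearMap.smul_apply, norm_smul, Real.norm_eq_abs,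
      abs_of_pos hs, smul_smul]
    field_simp

theorem matrix_rounding :
    ∃ C : ℝ, 0 < C ∧
      ∀ (d : ℕ) (A : Matrix (Fin d) (Fin d) ℝ), IsUnit A.det →
        ∀ ε σbar : ℝ, 0 < ε → ε < 1 → sigmaMin A / 2 ≤ σbar → σbar ≤ sigmaMin A →
          ∀ Ahat : Matrix (Fin d) (Fin d) ℝ,
            (Ahat = Matrix.of fun i j => ((round ((d / (σbar * ε)) * A i j) : ℤ) : ℝ)) →
            condNum Ahat ≤ condNum A * (1 + 4 * ε) ∧
            (∀ x : EuclideanSpace ℝ (Fin d), x ≠ 0 →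
              ‖forster A x - forster Ahat x‖ ≤ 2 * ε) ∧
            (∀ i j, |Ahat i j| ≤ C * d * condNum A / ε) := by
  refine ⟨3, by norm_num, fun d A hA ε σbar hε₀ hε₁ hσbar₁ hσbar₂ Ahat hAhat => ?_⟩
  rcases Nat.eq_zero_or_pos d with rfl | hd
  · exact ⟨by simp [condNum, sigmaMax_fin_zero], fun x hx => (hx (Subsingleton.elim x 0)).elim,
      fun i => i.elim0⟩
  have : NeZero d := ⟨hd.ne'⟩
  obtain ⟨hlo, hhi⟩ := mul_sigmaMin_smul_mem_Icc hA hε₀ hσbar₁ hσbar₂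
  set s : ℝ := d / (σbar * ε)
  have hσbar : 0 < σbar := (half_pos (sigmaMin_pos hA)).trans_le hσbar₁
  have hs : 0 < s := by positivity
  have hsA : IsUnit (s • A).det := by rw [det_smul]; exact (hs.ne'.isUnit.pow _).mul hA
  have hσs : 0 < sigmaMin (s • A) := sigmaMin_pos hsA
  have hround : sigmaMax (Ahat - s • A) ≤ d / 2 := by
    refine (norm_toEuclideanCLM_le_card_mul (c := 1 / 2) fun i j => ?_).trans_eq (by simp; ring)
    simpa [hAhat, abs_sub_comm] using abs_sub_round (s * A i j)
  refine ⟨?_, fun x hx => ?_, fun i j => ?_⟩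
  · rw [← condNum_smul hs.ne' hA]
    exact condNum_le_mul_one_add_four_mul hsA hε₁ hround (by linarith)
  · rw [← forster_smul hs A]
    calc _ ≤ 2 * (d / 2) / sigmaMin (s • A) := norm_forster_sub_le hsA hround hσs hx
      _ ≤ 2 * ε := by rw [div_le_iff₀ hσs]; nlinarith
  · have hκ := one_le_condNum hA
    calc |Ahat i j| ≤ condNum A * sigmaMin (s • A) + d / 2 := by
          rw [← condNum_smul hs.ne' hA, condNum_mul_sigmaMin hsA]
          exact abs_apply_le_sigmaMax_add hround i j
      _ ≤ 3 * d * condNum A / ε := by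
          rw [le_div_iff₀ hε₀]
          nlinarith [mul_le_mul_of_nonneg_left hhi (by linarith : (0 : ℝ) ≤ condNum A)]
end

section
/- Let V, W be subspaces of ℝ^d and define R = span(W ∪ V^⊥) ∩ W^⊥. Then the identity decomposes as I = P_R + P_W + P_{W^⊥ ∩ V}; that is, W, R, and W^⊥ ∩ V are pairwise orthogonal subspaces whose direct sum is ℝ^d. -/
/-! `R` is the orthogonal complement of `W` inside `U = W ⊔ Vᗮ`, so `P_W + P_R = P_U`, while
`Uᗮ = Wᗮ ⊓ V`; hence the three projections add up to `P_U + P_{Uᗮ} = 1`. -/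

namespace Submodule

variable {𝕜 E : Type*} [RCLike 𝕜] [NormedAddCommGroup E] [InnerProductSpace 𝕜 E]

theorem IsOrtho.starProjection_sup {U V : Submodule 𝕜 E} [U.HasOrthogonalProjection]
    [V.HasOrthogonalProjection] [(U ⊔ V).HasOrthogonalProjection] (h : U ⟂ V) (x : E) :
    (U ⊔ V).starProjection x = U.starProjection x + V.starProjection x := by
  refine eq_starProjection_of_mem_orthogonal
    (add_mem (mem_sup_left (U.starProjection_apply_mem x))
      (mem_sup_right (V.starProjection_apply_mem x))) ?_
  rw [← inf_orthogonal]
  constructor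
  · rw [← sub_sub]
    exact sub_mem (U.sub_starProjection_mem_orthogonal x) (h.symm.le (V.starProjection_apply_mem x))
  · rw [← sub_sub, sub_right_comm]
    exact sub_mem (V.sub_starProjection_mem_orthogonal x) (h.le (U.starProjection_apply_mem x))

end Submodule

open Submodule in
theorem subspace_partition {d : ℕ} (V W : Submodule ℝ (EuclideanSpace ℝ (Fin d)))
    (R : Submodule ℝ (EuclideanSpace ℝ (Fin d))) (hR : R = (W ⊔ Vᗮ) ⊓ Wᗮ) :
    ∀ x : EuclideanSpace ℝ (Fin d),
      (Submodule.orthogonalProjectionOnto R x : EuclideanSpace ℝ (Fin d)) +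
      (Submodule.orthogonalProjectionOnto W x : EuclideanSpace ℝ (Fin d)) +
      (Submodule.orthogonalProjectionOnto (Wᗮ ⊓ V) x : EuclideanSpace ℝ (Fin d)) = x := by
  intro x
  have hortho : W ⟂ R := (isOrtho_iff_le.mpr (hR ▸ inf_le_right)).symm
  have hsup : W ⊔ R = W ⊔ Vᗮ := by
    rw [hR, inf_comm]
    exact sup_orthogonal_inf_of_hasOrthogonalProjection le_sup_left
  have hcompl : (W ⊔ R)ᗮ = Wᗮ ⊓ V := by
    rw [hsup, ← inf_orthogonal, orthogonal_orthogonal]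
  simp only [coe_orthogonalProjectionOnto_apply]
  rw [add_comm (R.starProjection x), ← hortho.starProjection_sup]
  simp only [← hcompl, starProjection_add_starProjection_orthogonal]
end
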